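/- In the two-stepsize stochastic gradient ascent setting, suppose the objective does not increase much over the period: E[J(θ_{k_thre})] − J(θ_0) ≤ J_thre for some J_thre > 0. Then for every integer p with 0 ≤ p ≤ k_thre, the cumulative expected squared gradient norms are bounded: ∑_{q=0}^{p−1} E‖∇J(θ_q)‖² ≤ J_thre/α + k_thre L α ℓ² / 2 + L β² ℓ² / (2α). -/

import Mathlib

open MeasureTheory Filter Topology

lemma grad_lipschitz_taylor {d : ℕ} (J : EuclideanSpace ℝ (Fin d) → ℝ)
    (hJdiff : Differentiable ℝ J) {L : ℝ} (hL : 0 ≤ L)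
    (hLip : ∀ x y, ‖gradient J x - gradient J y‖ ≤ L * ‖x - y‖)
    (x y : EuclideanSpace ℝ (Fin d)) :
    |J y - J x - inner ℝ (gradient J x) (y - x)| ≤ L / 2 * ‖y - x‖ ^ 2 := by
  set v := y - x with hv
  have hgc : Continuous (gradient J) :=
    (LipschitzWith.of_dist_le_mul (K := ⟨L, hL⟩) fun a b => by
      rw [dist_eq_norm, dist_eq_norm]; exact hLip a b).continuous
  have hline : ∀ t : ℝ, HasDerivAt (fun t : ℝ => x + t • v) v t := fun t => by
    simpa using ((hasDerivAt_id t).smul_const v).const_add x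
  have hφ : ∀ t : ℝ, HasDerivAt (fun t : ℝ => J (x + t • v))
      (inner ℝ (gradient J (x + t • v)) v : ℝ) t := by
    intro t
    have hF : HasFDerivAt J ((InnerProductSpace.toDual ℝ _) (gradient J (x + t • v)))
        (x + t • v) := hasGradientAt_iff_hasFDerivAt.mp (hJdiff _).hasGradientAt
    have h := hF.comp_hasDerivAt t (hline t)
    rw [InnerProductSpace.toDual_apply_apply] at h
    exact h
  have hcont : Continuous fun t : ℝ => (inner ℝ (gradient J (x + t • v)) v : ℝ) := by
    exact Continuous.inner (hgc.comp (by continuity)) continuous_const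
  have key : J y - J x = ∫ t in (0:ℝ)..1, (inner ℝ (gradient J (x + t • v)) v : ℝ) := by
    have := intervalIntegral.integral_eq_sub_of_hasDerivAt (f := fun t : ℝ => J (x + t • v))
      (fun t _ => hφ t) (hcont.intervalIntegrable 0 1)
    rw [this]
    simp [hv]
  have hconst : (inner ℝ (gradient J x) v : ℝ) = ∫ t in (0:ℝ)..1, (inner ℝ (gradient J x) v : ℝ) := by
    simp
  have hdiff : J y - J x - inner ℝ (gradient J x) v
      = ∫ t in (0:ℝ)..1, (inner ℝ (gradient J (x + t • v)) v - inner ℝ (gradient J x) v : ℝ) := by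
    rw [key, hconst, ← intervalIntegral.integral_sub (hcont.intervalIntegrable 0 1)
      (intervalIntegrable_const)]
    simp
  rw [hdiff]
  have hbound : ∀ t ∈ Set.Ioc (0:ℝ) 1,
      |(inner ℝ (gradient J (x + t • v)) v - inner ℝ (gradient J x) v : ℝ)| ≤ L * ‖v‖ ^ 2 * t := by
    intro t ht
    rw [← inner_sub_left]
    calc |(inner ℝ (gradient J (x + t • v) - gradient J x) v : ℝ)|
        ≤ ‖gradient J (x + t • v) - gradient J x‖ * ‖v‖ := abs_real_inner_le_norm _ _
      _ ≤ (L * ‖(x + t • v) - x‖) * ‖v‖ := by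
          gcongr; exact hLip _ _
      _ = L * ‖v‖ ^ 2 * t := by
          rw [add_sub_cancel_left, norm_smul, Real.norm_eq_abs, abs_of_pos ht.1]; ring
  have h1 : |∫ t in (0:ℝ)..1, (inner ℝ (gradient J (x + t • v)) v - inner ℝ (gradient J x) v : ℝ)|
      ≤ L * ‖v‖ ^ 2 / 2 := by
    have hgint : IntervalIntegrable (fun t : ℝ => L * ‖v‖ ^ 2 * t) MeasureTheory.volume 0 1 := by
      apply Continuous.intervalIntegrable; continuity
    have hle := intervalIntegral.norm_integral_le_of_norm_le
      (f := fun t : ℝ => (inner ℝ (gradient J (x + t • v)) v - inner ℝ (gradient J x) v : ℝ))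
      (g := fun t : ℝ => L * ‖v‖ ^ 2 * t) (a := (0:ℝ)) (b := 1) (μ := MeasureTheory.volume)
      (zero_le_one' ℝ) ?_ hgint
    · refine hle.trans ?_
      rw [intervalIntegral.integral_const_mul, integral_id]
      rw [show ((1:ℝ) ^ 2 - 0 ^ 2) / 2 = 1 / 2 by norm_num]
      linarith [mul_nonneg (mul_nonneg hL (sq_nonneg ‖v‖)) (zero_le_one' ℝ)]
    · filter_upwards with t ht'
      rw [Real.norm_eq_abs]
      exact hbound t ht'
  calc _ ≤ L * ‖v‖ ^ 2 / 2 := h1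
    _ = L / 2 * ‖v‖ ^ 2 := by ring

lemma condexp_clm_comm {Ω : Type*} {m mΩ : MeasurableSpace Ω} {μ : Measure Ω}
    [IsFiniteMeasure μ] (hm : m ≤ mΩ)
    {E F : Type*} [NormedAddCommGroup E] [NormedSpace ℝ E] [CompleteSpace E]
    [NormedAddCommGroup F] [NormedSpace ℝ F] [CompleteSpace F]
    (T : E →L[ℝ] F) {f : Ω → E} (hf : Integrable f μ) :
    μ[(fun ω => T (f ω))|m] =ᵐ[μ] fun ω => T ((μ[f|m]) ω) := by
  refine (ae_eq_condExp_of_forall_setIntegral_eq hm (T.integrable_comp hf)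
    (fun s _ _ => (T.integrable_comp integrable_condExp).integrableOn)
    (fun s hs hμs => ?_)
    (StronglyMeasurable.aestronglyMeasurable
      (T.continuous.comp_stronglyMeasurable stronglyMeasurable_condExp))).symm
  rw [ContinuousLinearMap.integral_comp_comm T integrable_condExp.integrableOn,
    ContinuousLinearMap.integral_comp_comm T hf.integrableOn,
    setIntegral_condExp hm hf hs]

lemma coord_abs_le_norm {d : ℕ} (x : EuclideanSpace ℝ (Fin d)) (i : Fin d) :
    |x i| ≤ ‖x‖ := by
  rw [EuclideanSpace.norm_eq, ← Real.sqrt_sq (abs_nonneg (x i)), sq_abs]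
  apply Real.sqrt_le_sqrt
  have := Finset.single_le_sum (f := fun j => ‖x j‖ ^ 2)
    (fun j _ => sq_nonneg _) (Finset.mem_univ i)
  simpa [Real.norm_eq_abs, sq_abs] using this

set_option maxHeartbeats 2000000 in
/-- In the two-stepsize (Modified RPG) iteration, if the objective does
not improve by more than `J_thre` over one period, then the cumulative expected squared
gradient norms are bounded by `J_thre/α + k_thre·Lαℓ²/2 + Lβ²ℓ²/(2α)`. -/
theorem mrpg_cumulative_gradient_bound
    {d : ℕ} (hd : 1 ≤ d)
    {Ω : Type*} {mΩ : MeasurableSpace Ω} {μ : Measure Ω} [IsProbabilityMeasure μ]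
    (ℱ : Filtration ℕ mΩ)
    (L ℓ : ℝ) (hL : 0 < L) (hℓ : 0 < ℓ)
    (J : EuclideanSpace ℝ (Fin d) → ℝ)
    (hJdiff : Differentiable ℝ J)
    (hJLip : ∀ x y : EuclideanSpace ℝ (Fin d),
      ‖gradient J x - gradient J y‖ ≤ L * ‖x - y‖)
    (θ g : ℕ → Ω → EuclideanSpace ℝ (Fin d))
    (x₀ : EuclideanSpace ℝ (Fin d)) (hθ0 : θ 0 = fun _ => x₀)
    (hθadapted : Adapted ℱ θ)
    (hgmeas : ∀ p, StronglyMeasurable[ℱ (p + 1)] (g p))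
    (hunbiased : ∀ p, μ[g p | ℱ p] =ᵐ[μ] fun ω => gradient J (θ p ω))
    (hgbdd : ∀ p, ∀ᵐ ω ∂μ, ‖g p ω‖ ≤ ℓ)
    (α β : ℝ) (hα : 0 < α) (hαβ : α ≤ β)
    (kthre : ℕ) (hkthre : 1 ≤ kthre)
    (hstep0 : ∀ ω, θ 1 ω = θ 0 ω + β • g 0 ω)
    (hstep : ∀ p : ℕ, 1 ≤ p → p < kthre → ∀ ω, θ (p + 1) ω = θ p ω + α • g p ω)
    (Jthre : ℝ) (hJthre : 0 < Jthre)
    (hnoimprove : (∫ ω, J (θ kthre ω) ∂μ) - J x₀ ≤ Jthre) :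
    ∀ p : ℕ, p ≤ kthre →
      ∑ q ∈ Finset.range p, ∫ ω, ‖gradient J (θ q ω)‖ ^ 2 ∂μ ≤
        Jthre / α + (kthre : ℝ) * L * α * ℓ ^ 2 / 2 + L * β ^ 2 * ℓ ^ 2 / (2 * α) := by
  have hβ : 0 < β := lt_of_lt_of_le hα hαβ
  have hgc : Continuous (gradient J) :=
    (LipschitzWith.of_dist_le_mul (K := ⟨L, hL.le⟩) fun a b => by
      rw [dist_eq_norm, dist_eq_norm]; exact hJLip a b).continuous
  have hθsm : ∀ q, StronglyMeasurable (θ q) := fun q => ((hθadapted q).mono (ℱ.le q) le_rfl).stronglyMeasurable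
  have hgsm : ∀ q, AEStronglyMeasurable (g q) μ :=
    fun q => ((hgmeas q).mono (ℱ.le (q + 1))).aestronglyMeasurable
  have hgint : ∀ q, Integrable (g q) μ :=
    fun q => ⟨hgsm q, HasFiniteIntegral.of_bounded (hgbdd q)⟩
  -- coordinate facts
  have hgi_bdd : ∀ q (i : Fin d), ∀ᵐ ω ∂μ, |g q ω i| ≤ ℓ := fun q i =>
    (hgbdd q).mono fun ω h => le_trans (coord_abs_le_norm _ _) h
  have hgi_int : ∀ q (i : Fin d), Integrable (fun ω => g q ω i) μ := by
    intro q i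
    refine ⟨(EuclideanSpace.proj i).continuous.comp_aestronglyMeasurable (hgsm q),
      HasFiniteIntegral.of_bounded (C := ℓ) ?_⟩
    exact (hgi_bdd q i).mono fun ω h => by rwa [Real.norm_eq_abs]
  have hcoord : ∀ q (i : Fin d),
      (μ[fun ω => g q ω i|ℱ q]) =ᵐ[μ] fun ω => gradient J (θ q ω) i := by
    intro q i
    have h1 := condexp_clm_comm (ℱ.le q) (EuclideanSpace.proj (𝕜 := ℝ) i) (hgint q)
    refine h1.trans ?_
    filter_upwards [hunbiased q] with ω hω
    rw [hω]
    rfl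
  have hGsm : ∀ q (i : Fin d), StronglyMeasurable[ℱ q] (fun ω => gradient J (θ q ω) i) :=
    fun q i => ((EuclideanSpace.proj (𝕜 := ℝ) i).continuous.comp hgc).comp_stronglyMeasurable
      (hθadapted q).stronglyMeasurable
  have hGi_bdd : ∀ q (i : Fin d), ∀ᵐ ω ∂μ, |gradient J (θ q ω) i| ≤ ℓ := by
    intro q i
    have h := ae_bdd_condExp_of_ae_bdd (m := ℱ q) (R := ⟨ℓ, hℓ.le⟩) (hgi_bdd q i)
    filter_upwards [h, hcoord q i] with ω h1 h2
    rw [← h2]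
    exact_mod_cast h1
  have hGgi_int : ∀ q (i : Fin d),
      Integrable (fun ω => gradient J (θ q ω) i * g q ω i) μ := by
    intro q i
    refine ⟨(((hGsm q i).mono (ℱ.le q)).aestronglyMeasurable).mul
      ((EuclideanSpace.proj i).continuous.comp_aestronglyMeasurable (hgsm q)),
      HasFiniteIntegral.of_bounded (C := ℓ * ℓ) ?_⟩
    filter_upwards [hGi_bdd q i, hgi_bdd q i] with ω h1 h2
    rw [Real.norm_eq_abs, abs_mul]
    exact mul_le_mul h1 h2 (abs_nonneg _) hℓ.le
  have hGi2_int : ∀ q (i : Fin d),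
      Integrable (fun ω => gradient J (θ q ω) i ^ 2) μ := by
    intro q i
    refine ⟨(((hGsm q i).mono (ℱ.le q)).aestronglyMeasurable).pow 2,
      HasFiniteIntegral.of_bounded (C := ℓ ^ 2) ?_⟩
    filter_upwards [hGi_bdd q i] with ω h1
    rw [Real.norm_eq_abs, abs_pow]
    exact pow_le_pow_left₀ (abs_nonneg _) h1 2
  -- inner products as coordinate sums
  have hinner : ∀ q ω, (inner ℝ (gradient J (θ q ω)) (g q ω) : ℝ)
      = ∑ i, gradient J (θ q ω) i * g q ω i := by
    intro q ω
    rw [PiLp.inner_apply]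
    simp [RCLike.inner_apply, conj_trivial, mul_comm]
  have hnorm2 : ∀ q ω, ‖gradient J (θ q ω)‖ ^ 2 = ∑ i, gradient J (θ q ω) i ^ 2 := by
    intro q ω
    rw [← real_inner_self_eq_norm_sq, PiLp.inner_apply]
    simp [RCLike.inner_apply, conj_trivial, sq]
  have hip_int : ∀ q, Integrable (fun ω => (inner ℝ (gradient J (θ q ω)) (g q ω) : ℝ)) μ := by
    intro q
    have : (fun ω => (inner ℝ (gradient J (θ q ω)) (g q ω) : ℝ))
        = fun ω => ∑ i, gradient J (θ q ω) i * g q ω i := funext (hinner q)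
    rw [this]
    exact integrable_finset_sum _ fun i _ => hGgi_int q i
  have hnorm2_int : ∀ q, Integrable (fun ω => ‖gradient J (θ q ω)‖ ^ 2) μ := by
    intro q
    have : (fun ω => ‖gradient J (θ q ω)‖ ^ 2)
        = fun ω => ∑ i, gradient J (θ q ω) i ^ 2 := funext (hnorm2 q)
    rw [this]
    exact integrable_finset_sum _ fun i _ => hGi2_int q i
  -- key identity
  have hkey : ∀ q, ∫ ω, (inner ℝ (gradient J (θ q ω)) (g q ω) : ℝ) ∂μ
      = ∫ ω, ‖gradient J (θ q ω)‖ ^ 2 ∂μ := by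
    intro q
    simp_rw [hinner q, hnorm2 q]
    rw [integral_finset_sum _ fun i _ => hGgi_int q i,
      integral_finset_sum _ fun i _ => hGi2_int q i]
    refine Finset.sum_congr rfl fun i _ => ?_
    rw [← integral_condExp (ℱ.le q)
      (f := fun ω => gradient J (θ q ω) i * g q ω i)]
    have e1 : μ[(fun ω => gradient J (θ q ω) i) * (fun ω => g q ω i)|ℱ q]
        =ᵐ[μ] (fun ω => gradient J (θ q ω) i) * μ[fun ω => g q ω i|ℱ q] :=
      condExp_mul_of_stronglyMeasurable_left (hGsm q i) (hGgi_int q i) (hgi_int q i)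
    refine integral_congr_ae ?_
    refine (ae_eq_trans ?_ (e1.trans ?_))
    · rfl
    · filter_upwards [hcoord q i] with ω h
      simp only [Pi.mul_apply]
      rw [h, sq]
  -- boundedness of iterates
  have hθbdd : ∀ q, q ≤ kthre → ∀ᵐ ω ∂μ, ‖θ q ω - x₀‖ ≤ q * (β * ℓ) := by
    intro q
    induction q with
    | zero => intro _; filter_upwards with ω; simp [hθ0]
    | succ q ih =>
      intro hq
      obtain ⟨c, hc0, hcβ, hstepc⟩ : ∃ c : ℝ, 0 ≤ c ∧ c ≤ β ∧
          ∀ ω, θ (q + 1) ω = θ q ω + c • g q ω := by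
        rcases Nat.eq_zero_or_pos q with h | h
        · subst h; exact ⟨β, hβ.le, le_refl β, hstep0⟩
        · exact ⟨α, hα.le, hαβ, hstep q h (by omega)⟩
      filter_upwards [ih (by omega), hgbdd q] with ω h1 h2
      rw [hstepc ω]
      have e : θ q ω + c • g q ω - x₀ = (θ q ω - x₀) + c • g q ω := by abel
      rw [e]
      calc ‖(θ q ω - x₀) + c • g q ω‖ ≤ ‖θ q ω - x₀‖ + ‖c • g q ω‖ := norm_add_le _ _
        _ ≤ q * (β * ℓ) + β * ℓ := by
            refine add_le_add h1 ?_
            rw [norm_smul, Real.norm_eq_abs, abs_of_nonneg hc0]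
            exact mul_le_mul hcβ h2 (norm_nonneg _) hβ.le
        _ = (q + 1 : ℕ) * (β * ℓ) := by push_cast; ring
  -- integrability of J ∘ θ
  have hJint : ∀ q, q ≤ kthre → Integrable (fun ω => J (θ q ω)) μ := by
    intro q hq
    refine ⟨(hJdiff.continuous.comp_stronglyMeasurable (hθsm q)).aestronglyMeasurable,
      HasFiniteIntegral.of_bounded
        (C := |J x₀| + ‖gradient J x₀‖ * (q * (β * ℓ)) + L / 2 * (q * (β * ℓ)) ^ 2) ?_⟩
    filter_upwards [hθbdd q hq] with ω h
    have ht := grad_lipschitz_taylor J hJdiff hL.le hJLip x₀ (θ q ω)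
    have hip : |(inner ℝ (gradient J x₀) (θ q ω - x₀) : ℝ)| ≤ ‖gradient J x₀‖ * (q * (β * ℓ)) :=
      le_trans (abs_real_inner_le_norm _ _)
        (mul_le_mul_of_nonneg_left h (norm_nonneg _))
    have h2 : ‖θ q ω - x₀‖ ^ 2 ≤ (q * (β * ℓ)) ^ 2 := pow_le_pow_left₀ (norm_nonneg _) h 2
    have h3 : L / 2 * ‖θ q ω - x₀‖ ^ 2 ≤ L / 2 * (q * (β * ℓ)) ^ 2 :=
      mul_le_mul_of_nonneg_left h2 (by linarith)
    rw [Real.norm_eq_abs]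
    have habs := abs_le.mp ht
    have hip' := abs_le.mp hip
    have hJx := abs_le.mp (le_refl |J x₀|)
    rw [abs_le]
    constructor <;> nlinarith [neg_abs_le (J x₀), le_abs_self (J x₀)]
  -- one-step descent, integrated
  have hstep_int : ∀ q, q < kthre → ∀ c : ℝ, 0 < c → c ≤ β →
      (∀ ω, θ (q + 1) ω = θ q ω + c • g q ω) →
      (∫ ω, J (θ q ω) ∂μ) + c * (∫ ω, ‖gradient J (θ q ω)‖ ^ 2 ∂μ) - L * c ^ 2 * ℓ ^ 2 / 2
        ≤ ∫ ω, J (θ (q + 1) ω) ∂μ := by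
    intro q hq c hc hcβ hrec
    have hae : ∀ᵐ ω ∂μ, J (θ q ω) + c * (inner ℝ (gradient J (θ q ω)) (g q ω) : ℝ)
        - L * c ^ 2 * ℓ ^ 2 / 2 ≤ J (θ (q + 1) ω) := by
      filter_upwards [hgbdd q] with ω hg
      have ht := grad_lipschitz_taylor J hJdiff hL.le hJLip (θ q ω) (θ (q + 1) ω)
      rw [hrec ω, add_sub_cancel_left] at ht
      have h2 : (inner ℝ (gradient J (θ q ω)) (c • g q ω) : ℝ)
          = c * inner ℝ (gradient J (θ q ω)) (g q ω) := real_inner_smul_right _ _ _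
      rw [h2] at ht
      have h3 : ‖c • g q ω‖ ^ 2 ≤ c ^ 2 * ℓ ^ 2 := by
        rw [norm_smul, mul_pow, Real.norm_eq_abs, sq_abs]
        exact mul_le_mul_of_nonneg_left (pow_le_pow_left₀ (norm_nonneg _) hg 2) (sq_nonneg c)
      have h4 := (abs_le.mp ht).1
      have h5 : L / 2 * ‖c • g q ω‖ ^ 2 ≤ L / 2 * (c ^ 2 * ℓ ^ 2) :=
        mul_le_mul_of_nonneg_left h3 (by linarith)
      rw [hrec ω]
      nlinarith [h4, h5]
    have hIl : Integrable (fun ω => J (θ q ω)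
        + c * (inner ℝ (gradient J (θ q ω)) (g q ω) : ℝ) - L * c ^ 2 * ℓ ^ 2 / 2) μ :=
      ((hJint q hq.le).add ((hip_int q).const_mul c)).sub (integrable_const _)
    have hmono := integral_mono_ae hIl (hJint (q + 1) hq) hae
    have hLHS : ∫ ω, (J (θ q ω) + c * (inner ℝ (gradient J (θ q ω)) (g q ω) : ℝ)
        - L * c ^ 2 * ℓ ^ 2 / 2) ∂μ
        = (∫ ω, J (θ q ω) ∂μ) + c * (∫ ω, ‖gradient J (θ q ω)‖ ^ 2 ∂μ)
          - L * c ^ 2 * ℓ ^ 2 / 2 := by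
      have hInt1 : Integrable (fun ω => J (θ q ω)
          + c * (inner ℝ (gradient J (θ q ω)) (g q ω) : ℝ)) μ :=
        (hJint q hq.le).add ((hip_int q).const_mul c)
      rw [integral_sub hInt1 (integrable_const _),
        integral_add (hJint q hq.le) ((hip_int q).const_mul c),
        MeasureTheory.integral_const_mul, integral_const, probReal_univ, one_smul,
        hkey q]
    rw [hLHS] at hmono
    exact hmono
  -- telescoping lower bound
  have hI_nonneg : ∀ q, 0 ≤ ∫ ω, ‖gradient J (θ q ω)‖ ^ 2 ∂μ :=
    fun q => integral_nonneg fun ω => sq_nonneg _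
  have hE0 : ∫ ω, J (θ 0 ω) ∂μ = J x₀ := by
    rw [hθ0]; simp
  have htel : ∀ n, 1 ≤ n → n ≤ kthre →
      J x₀ + α * (∑ q ∈ Finset.range n, ∫ ω, ‖gradient J (θ q ω)‖ ^ 2 ∂μ)
        - L * β ^ 2 * ℓ ^ 2 / 2 - ((n : ℝ) - 1) * (L * α ^ 2 * ℓ ^ 2 / 2)
        ≤ ∫ ω, J (θ n ω) ∂μ := by
    intro n
    induction n with
    | zero => omega
    | succ n ih =>
      intro _ hn
      rcases Nat.eq_zero_or_pos n with h | h
      · subst h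
        have h1 := hstep_int 0 (by omega) β hβ le_rfl hstep0
        rw [hE0] at h1
        have hβα : α * (∫ ω, ‖gradient J (θ 0 ω)‖ ^ 2 ∂μ)
            ≤ β * (∫ ω, ‖gradient J (θ 0 ω)‖ ^ 2 ∂μ) :=
          mul_le_mul_of_nonneg_right hαβ (hI_nonneg 0)
        rw [Finset.sum_range_succ, Finset.sum_range_zero, zero_add]
        push_cast
        nlinarith [sq_nonneg β, sq_nonneg ℓ, mul_nonneg (mul_nonneg hL.le (sq_nonneg β)) (sq_nonneg ℓ)]
      · have h1 := hstep_int n (by omega) α hα hαβ (hstep n h (by omega))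
        have h2 := ih h (by omega)
        rw [Finset.sum_range_succ]
        push_cast
        nlinarith [mul_nonneg (mul_nonneg hL.le (sq_nonneg α)) (sq_nonneg ℓ)]
  -- conclude
  intro p hp
  have hfull := htel kthre hkthre le_rfl
  have hSmono : (∑ q ∈ Finset.range p, ∫ ω, ‖gradient J (θ q ω)‖ ^ 2 ∂μ)
      ≤ ∑ q ∈ Finset.range kthre, ∫ ω, ‖gradient J (θ q ω)‖ ^ 2 ∂μ :=
    Finset.sum_le_sum_of_subset_of_nonneg (Finset.range_subset_range.2 hp)
      (fun q _ _ => hI_nonneg q)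
  set Sk := ∑ q ∈ Finset.range kthre, ∫ ω, ‖gradient J (θ q ω)‖ ^ 2 ∂μ with hSk
  have hαS : α * Sk ≤ Jthre + L * β ^ 2 * ℓ ^ 2 / 2
      + ((kthre : ℝ) - 1) * (L * α ^ 2 * ℓ ^ 2 / 2) := by
    have := hnoimprove
    linarith
  have hk1 : (1 : ℝ) ≤ (kthre : ℝ) := by exact_mod_cast hkthre
  have hnn : 0 ≤ L * α ^ 2 * ℓ ^ 2 / 2 := by positivity
  have hαS' : α * Sk ≤ Jthre + L * β ^ 2 * ℓ ^ 2 / 2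
      + (kthre : ℝ) * (L * α ^ 2 * ℓ ^ 2 / 2) := by nlinarith
  have hRHS : α * (Jthre / α + (kthre : ℝ) * L * α * ℓ ^ 2 / 2 + L * β ^ 2 * ℓ ^ 2 / (2 * α))
      = Jthre + L * β ^ 2 * ℓ ^ 2 / 2 + (kthre : ℝ) * (L * α ^ 2 * ℓ ^ 2 / 2) := by
    field_simp
    ring
  have hfin : α * (∑ q ∈ Finset.range p, ∫ ω, ‖gradient J (θ q ω)‖ ^ 2 ∂μ)
      ≤ α * (Jthre / α + (kthre : ℝ) * L * α * ℓ ^ 2 / 2 + L * β ^ 2 * ℓ ^ 2 / (2 * α)) := by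
    rw [hRHS]
    calc α * (∑ q ∈ Finset.range p, ∫ ω, ‖gradient J (θ q ω)‖ ^ 2 ∂μ)
        ≤ α * Sk := mul_le_mul_of_nonneg_left hSmono hα.le
      _ ≤ _ := hαS'
  exact le_of_mul_le_mul_left hfin hα
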